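/- arXiv:0801.0023 — 7 statements merged into one kernel-verified Lean document; each statement's English description precedes it below -/
import Mathlib

section
/- Let k ≥ 0 be a real number and let a : ℕ → ℂ satisfy a(0) = 0 and |a(n)| ≤ C·n^k for some constant C > 0 and all n ≥ 1, so that F(z) = Σ_{n≥1} a(n) z^n converges for |z| < 1. Then for every s ∈ ℂ with Re s > k + 1: (i) the function z ↦ (−log z)^{s−1} · F(z) / z is Lebesgue integrable on (0,1), and (ii) (1/Γ(s)) · ∫_0^1 (−log z)^{s−1} · F(z) · z^{−1} dz = Σ_{n≥1} a(n) / n^s, where n^s = exp(s · log n). -/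
/-!
Substituting `z = exp (-t)` turns the integral into the Mellin transform at `s` of
`t ↦ ∑ a n exp (-n t)`. Termwise, `∫₀^∞ t ^ (s - 1) exp (-n t) dt = Γ(s) / n ^ s`, and the exchange
of sum and integral is justified because the integrals of the absolute values of the terms sum to
`Γ(σ) ∑ |a n| / n ^ σ`, which is finite for `σ = Re s > k + 1`.
-/

open MeasureTheory Filter Set Real Asymptotics

theorem MeasureTheory.integrable_tsum_of_summable_integral_norm {ι α E : Type*} [Countable ι]
    [MeasurableSpace α] {μ : Measure α} [NormedAddCommGroup E] [CompleteSpace E]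
    {f : ι → α → E} (hf : ∀ i, Integrable (f i) μ)
    (hf_sum : Summable fun i ↦ ∫ x, ‖f i x‖ ∂μ) :
    Integrable (fun x ↦ ∑' i, f i x) μ := by
  have hmeas : ∀ i, AEMeasurable (fun x ↦ ‖f i x‖ₑ) μ := fun i ↦ (hf i).1.enorm
  have hfin : ∫⁻ x, ∑' i, ‖f i x‖ₑ ∂μ < ⊤ := by
    rw [lintegral_tsum hmeas, ← funext fun i ↦ ofReal_integral_norm_eq_lintegral_enorm (hf i),
      ← ENNReal.ofReal_tsum_of_nonneg (fun i ↦ integral_nonneg fun _ ↦ norm_nonneg _) hf_sum]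
    exact ENNReal.ofReal_lt_top
  have hsum : ∀ᵐ x ∂μ, Summable fun i ↦ f i x := by
    filter_upwards [ae_lt_top' (AEMeasurable.tsum hmeas) hfin.ne] with x hx
    exact .of_norm (tsum_enorm_ne_top_iff_summable_norm.1 hx.ne)
  refine ⟨aestronglyMeasurable_of_tendsto_ae atTop
    (fun I ↦ Finset.aestronglyMeasurable_fun_sum I fun i _ ↦ (hf i).1)
    (hsum.mono fun x hx ↦ hx.hasSum), ?_⟩
  exact (lintegral_mono fun x ↦ enorm_tsum_le_tsum_enorm).trans_lt hfin

lemma summable_mul_pow_of_norm_le_mul_rpow {a : ℕ → ℂ} {C k : ℝ}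
    (ha : ∀ n : ℕ, 1 ≤ n → ‖a n‖ ≤ C * (n : ℝ) ^ k) {r : ℂ} (hr : ‖r‖ < 1) :
    Summable fun n ↦ a n * r ^ n := by
  refine .of_norm (summable_norm_mul_geometric_of_norm_lt_one' (k := ⌈k⌉₊) hr ?_)
  refine IsBigO.of_bound C ?_
  filter_upwards [eventually_ge_atTop 1] with n hn
  have hn' : (1 : ℝ) ≤ n := by exact_mod_cast hn
  calc ‖a n‖ ≤ C * (n : ℝ) ^ k := ha n hn
    _ ≤ C * ‖((n ^ ⌈k⌉₊ : ℕ) : ℂ)‖ := by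
      have hC : 0 ≤ C := nonneg_of_mul_nonneg_left ((norm_nonneg _).trans (ha n hn)) (by positivity)
      rw [Complex.norm_natCast, Nat.cast_pow, ← Real.rpow_natCast]
      gcongr
      exact Nat.le_ceil k

lemma summable_norm_div_rpow_of_norm_le_mul_rpow {a : ℕ → ℂ} {C k σ : ℝ}
    (ha : ∀ n : ℕ, 1 ≤ n → ‖a n‖ ≤ C * (n : ℝ) ^ k) (hσ : k + 1 < σ) :
    Summable fun n ↦ ‖a n‖ / (n : ℝ) ^ σ := by
  have hmajorant : Summable fun n : ℕ ↦ C * (n : ℝ) ^ (k - σ) :=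
    (Real.summable_nat_rpow.2 (by linarith)).mul_left C
  refine .of_norm_bounded_eventually_nat hmajorant ?_
  filter_upwards [eventually_ge_atTop 1] with n hn
  have hn' : (0 : ℝ) < n := by exact_mod_cast hn
  rw [Real.norm_of_nonneg (by positivity), Real.rpow_sub hn', ← mul_div_assoc]
  gcongr
  exact ha n hn

lemma hasSum_mul_exp_neg_mul_of_norm_le_mul_rpow {a : ℕ → ℂ} {C k : ℝ}
    (ha : ∀ n : ℕ, 1 ≤ n → ‖a n‖ ≤ C * (n : ℝ) ^ k) {t : ℝ} (ht : 0 < t) :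
    HasSum (fun n : ℕ ↦ a n * rexp (-n * t)) (∑' n : ℕ, a n * (rexp (-t) : ℂ) ^ n) := by
  have hr : ‖(rexp (-t) : ℂ)‖ < 1 := by
    rw [Complex.norm_real, Real.norm_of_nonneg (exp_nonneg _), exp_lt_one_iff]
    linarith
  convert (summable_mul_pow_of_norm_le_mul_rpow ha hr).hasSum using 2 with n
  rw [← Complex.ofReal_pow, ← exp_nat_mul, neg_mul, mul_neg]

lemma mellinConvergent_exp_neg_mul {s : ℂ} (hs : 0 < s.re) {p : ℝ} (hp : 0 < p) :
    MellinConvergent (fun t ↦ (rexp (-p * t) : ℂ)) s := by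
  have hGamma : MellinConvergent (fun t ↦ (rexp (-t) : ℂ)) s := by
    simpa only [MellinConvergent, smul_eq_mul, mul_comm] using Complex.GammaIntegral_convergent hs
  simpa only [neg_mul] using (MellinConvergent.comp_mul_left hp).2 hGamma

lemma integral_norm_cpow_mul_exp_neg_mul {s : ℂ} (hs : 0 < s.re) {p : ℝ} (hp : 0 < p) :
    ∫ t in Ioi (0 : ℝ), ‖(t : ℂ) ^ (s - 1) * rexp (-p * t)‖ = Real.Gamma s.re / p ^ s.re := by
  rw [div_eq_mul_inv, mul_comm, ← Real.inv_rpow hp.le, ← one_div,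
    ← Real.integral_rpow_mul_exp_neg_mul_Ioi hs hp]
  refine setIntegral_congr_fun measurableSet_Ioi fun t ht ↦ ?_
  rw [norm_mul, Complex.norm_real, Real.norm_of_nonneg (exp_nonneg _),
    Complex.norm_cpow_eq_rpow_re_of_pos ht, Complex.sub_re, Complex.one_re, neg_mul]

/-- The integrability counterpart of `hasSum_mellin`. -/
lemma mellinConvergent_of_hasSum_mul_exp_neg {ι : Type*} [Countable ι] {a : ι → ℂ} {p : ι → ℝ}
    {F : ℝ → ℂ} {s : ℂ} (hp : ∀ i, a i = 0 ∨ 0 < p i) (hs : 0 < s.re)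
    (hF : ∀ t ∈ Ioi 0, HasSum (fun i ↦ a i * rexp (-p i * t)) (F t))
    (h_sum : Summable fun i ↦ ‖a i‖ / p i ^ s.re) :
    MellinConvergent F s := by
  have hterm : ∀ i, MellinConvergent (fun t ↦ a i * rexp (-p i * t)) s := fun i ↦ by
    rcases hp i with hai | hpi
    · simp [hai, MellinConvergent]
    · exact (mellinConvergent_exp_neg_mul hs hpi).const_smul (a i)
  have hnorm : ∀ i, ∫ t in Ioi (0 : ℝ), ‖(t : ℂ) ^ (s - 1) • (a i * rexp (-p i * t))‖ =
      Real.Gamma s.re * (‖a i‖ / p i ^ s.re) := fun i ↦ by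
    rcases hp i with hai | hpi
    · simp [hai]
    · simp_rw [smul_eq_mul, mul_left_comm _ (a i), norm_mul (a i), integral_const_mul,
        integral_norm_cpow_mul_exp_neg_mul hs hpi]
      ring
  refine IntegrableOn.congr_fun (integrable_tsum_of_summable_integral_norm hterm ?_)
    (fun t ht ↦ ?_) measurableSet_Ioi
  · simpa only [hnorm] using h_sum.mul_left _
  · simp only [(hF t ht).tsum_eq ▸ tsum_mul_left, smul_eq_mul]

lemma image_exp_neg_Ioi_zero : (fun t ↦ rexp (-t)) '' Ioi 0 = Ioo 0 1 := by
  ext z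
  constructor
  · rintro ⟨t, ht, rfl⟩
    exact ⟨exp_pos _, exp_lt_one_iff.2 (neg_lt_zero.2 ht)⟩
  · rintro ⟨hz0, hz1⟩
    exact ⟨-log z, neg_pos.2 (log_neg hz0 hz1), by simp [exp_log hz0]⟩

lemma hasDerivWithinAt_exp_neg (s : Set ℝ) (t : ℝ) :
    HasDerivWithinAt (fun t ↦ rexp (-t)) (-rexp (-t)) s t := by
  simpa using ((hasDerivAt_neg t).exp).hasDerivWithinAt

lemma injective_exp_neg : Function.Injective fun t ↦ rexp (-t) :=
  exp_injective.comp neg_injective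

lemma abs_neg_exp_neg_smul_neg_log_cpow_mul_inv (G : ℝ → ℂ) (s : ℂ) (t : ℝ) :
    |-rexp (-t)| • (((-log (rexp (-t)) : ℝ) : ℂ) ^ (s - 1) * G (rexp (-t)) * (rexp (-t) : ℂ)⁻¹) =
      (t : ℂ) ^ (s - 1) • G (rexp (-t)) := by
  have : (rexp (-t) : ℂ) ≠ 0 := Complex.ofReal_ne_zero.2 (exp_pos _).ne'
  rw [abs_neg, abs_of_pos (exp_pos _), log_exp, neg_neg, Complex.real_smul, smul_eq_mul]
  field_simp

lemma integrableOn_Ioo_neg_log_cpow_iff_mellinConvergent (G : ℝ → ℂ) (s : ℂ) :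
    IntegrableOn (fun z : ℝ ↦ ((-log z : ℝ) : ℂ) ^ (s - 1) * G z * (z : ℂ)⁻¹) (Ioo 0 1) ↔
      MellinConvergent (fun t ↦ G (rexp (-t))) s := by
  rw [← image_exp_neg_Ioi_zero, integrableOn_image_iff_integrableOn_abs_deriv_smul
    measurableSet_Ioi (fun t _ ↦ hasDerivWithinAt_exp_neg _ t) injective_exp_neg.injOn]
  simp only [abs_neg_exp_neg_smul_neg_log_cpow_mul_inv, MellinConvergent]

lemma setIntegral_Ioo_neg_log_cpow_eq_mellin (G : ℝ → ℂ) (s : ℂ) :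
    ∫ z in Ioo 0 1, ((-log z : ℝ) : ℂ) ^ (s - 1) * G z * (z : ℂ)⁻¹ =
      mellin (fun t ↦ G (rexp (-t))) s := by
  rw [← image_exp_neg_Ioi_zero, integral_image_eq_integral_abs_deriv_smul measurableSet_Ioi
    (fun t _ ↦ hasDerivWithinAt_exp_neg _ t) injective_exp_neg.injOn]
  simp only [abs_neg_exp_neg_smul_neg_log_cpow_mul_inv, mellin]

theorem stmt_2_general (k : ℝ) (hk : 0 ≤ k) (a : ℕ → ℂ) (ha0 : a 0 = 0)
    (C : ℝ) (ha : ∀ n : ℕ, 1 ≤ n → ‖a n‖ ≤ C * (n : ℝ) ^ k)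
    (F : ℝ → ℂ) (hF : ∀ z : ℝ, F z = ∑' n : ℕ, a n * (z : ℂ) ^ n)
    (s : ℂ) (hs : k + 1 < s.re) :
    IntegrableOn (fun z : ℝ => ((-Real.log z : ℝ) : ℂ) ^ (s - 1) * F z * (z : ℂ)⁻¹)
      (Set.Ioo 0 1) ∧
    (1 / Complex.Gamma s) *
      ∫ z in Set.Ioo (0:ℝ) 1, ((-Real.log z : ℝ) : ℂ) ^ (s - 1) * F z * (z : ℂ)⁻¹ =
    ∑' n : ℕ, a n / (n : ℂ) ^ s := by
  have hσ : 0 < s.re := by linarith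
  have hp : ∀ n : ℕ, a n = 0 ∨ 0 < (n : ℝ) := fun n ↦
    n.eq_zero_or_pos.imp (fun (h : n = 0) ↦ h ▸ ha0) Nat.cast_pos.2
  have hFexp : ∀ t ∈ Ioi 0, HasSum (fun n : ℕ ↦ a n * rexp (-n * t)) (F (rexp (-t))) :=
    fun t ht ↦ hF _ ▸ hasSum_mul_exp_neg_mul_of_norm_le_mul_rpow ha ht
  have hsum := summable_norm_div_rpow_of_norm_le_mul_rpow ha hs
  refine ⟨(integrableOn_Ioo_neg_log_cpow_iff_mellinConvergent F s).2
    (mellinConvergent_of_hasSum_mul_exp_neg hp hσ hFexp hsum), ?_⟩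
  rw [setIntegral_Ioo_neg_log_cpow_eq_mellin, ← (hasSum_mellin hp hσ hFexp hsum).tsum_eq]
  simp_rw [mul_div_assoc, tsum_mul_left, ← mul_assoc, one_div,
    inv_mul_cancel₀ (Complex.Gamma_ne_zero_of_re_pos hσ), one_mul, Complex.ofReal_natCast]

theorem stmt_2 (k : ℝ) (hk : 0 ≤ k) (a : ℕ → ℂ) (ha0 : a 0 = 0)
    (C : ℝ) (hC : 0 < C) (ha : ∀ n : ℕ, 1 ≤ n → ‖a n‖ ≤ C * (n : ℝ) ^ k)
    (F : ℝ → ℂ) (hF : ∀ z : ℝ, F z = ∑' n : ℕ, a n * (z : ℂ) ^ n)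
    (s : ℂ) (hs : k + 1 < s.re) :
    IntegrableOn (fun z : ℝ => ((-Real.log z : ℝ) : ℂ) ^ (s - 1) * F z * (z : ℂ)⁻¹)
      (Set.Ioo 0 1) ∧
    (1 / Complex.Gamma s) *
      ∫ z in Set.Ioo (0:ℝ) 1, ((-Real.log z : ℝ) : ℂ) ^ (s - 1) * F z * (z : ℂ)⁻¹ =
    ∑' n : ℕ, a n / (n : ℂ) ^ s :=
  stmt_2_general k hk a ha0 C ha F hF s hs
end

section
/- Let k ≥ 0 be a real number and let a : ℕ → ℂ satisfy a(0) = 0 and |a(n)| ≤ C·n^k for some constant C > 0 and all n ≥ 1, and set F(z) = Σ_{n≥1} a(n) z^n for |z| < 1. Then for every REAL s with s > k + 1: (1/Γ(s)) · ∫_0^1 (−log z)^{s−1} · F(z) · z^{−1} dz = ∫_0^1 (Σ_{n≥1} a(n) · z^{n^s − 1}) dz, where n^s is the real power and z^{n^s−1} = exp((n^s − 1)·log z). -/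
/-!
Substituting `z = e^{-t}` turns `∫₀¹ (-log z)^{s-1} z^{c-1} dz` into Euler's integral
`∫₀^∞ t^{s-1} e^{-ct} dt = Γ(s) / c^s`; its case `s = 1` gives `∫₀¹ z^{c-1} dz = 1 / c`.
Expanding `F` (resp. the gap series) termwise therefore turns both sides into the Dirichlet series
`∑ a(n) / n^s`, up to the factor `Γ(s)` on the left. Since the termwise integrands are
`a(n)` times nonnegative functions, the integrals of their absolute values are `Γ(s) |a(n)| / n^s`
(resp. `|a(n)| / n^s`), which is summable because `|a(n)| = O(n^k)` and `s > k + 1`; this justifies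
exchanging sum and integral.
-/

open MeasureTheory Set

open Real in
theorem image_exp_neg_Ioi : (fun t : ℝ => exp (-t)) '' Ioi 0 = Ioo 0 1 := by
  ext x
  constructor
  · rintro ⟨t, ht, rfl⟩
    exact ⟨exp_pos _, exp_lt_one_iff.2 (neg_lt_zero.2 ht)⟩
  · rintro ⟨hx0, hx1⟩
    exact ⟨-log x, neg_pos.2 (log_neg hx0 hx1), by simp [exp_log hx0]⟩

open Real in
theorem integral_Ioo_zero_one_eq_integral_Ioi_exp_neg {E : Type*} [NormedAddCommGroup E]
    [NormedSpace ℝ E] (g : ℝ → E) :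
    ∫ z in Ioo (0 : ℝ) 1, g z = ∫ t in Ioi (0 : ℝ), exp (-t) • g (exp (-t)) := by
  have hderiv : ∀ t ∈ Ioi (0 : ℝ),
      HasDerivWithinAt (fun t : ℝ => exp (-t)) (-exp (-t)) (Ioi 0) t := fun t _ => by
    simpa using (hasDerivAt_neg t).exp.hasDerivWithinAt
  rw [← image_exp_neg_Ioi, integral_image_eq_integral_abs_deriv_smul measurableSet_Ioi hderiv
    (exp_injective.comp neg_injective).injOn]
  simp only [abs_neg, abs_of_pos (exp_pos _)]

open Real in
theorem integral_Ioo_neg_log_rpow_mul_rpow {s c : ℝ} (hs : 0 < s) (hc : 0 < c) :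
    ∫ z in Ioo (0 : ℝ) 1, (-log z) ^ (s - 1) * z ^ (c - 1) = Gamma s / c ^ s := by
  rw [integral_Ioo_zero_one_eq_integral_Ioi_exp_neg, div_eq_mul_inv, mul_comm, ← inv_rpow hc.le,
    ← one_div, ← integral_rpow_mul_exp_neg_mul_Ioi hs hc]
  refine setIntegral_congr_fun measurableSet_Ioi fun t _ => ?_
  rw [smul_eq_mul, log_exp, neg_neg, ← exp_mul, mul_left_comm, ← exp_add]
  ring_nf

theorem integral_Ioo_rpow_sub_one {c : ℝ} (hc : 0 < c) :
    ∫ z in Ioo (0 : ℝ) 1, z ^ (c - 1) = 1 / c := by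
  simpa using integral_Ioo_neg_log_rpow_mul_rpow one_pos hc

/-- Integrability is only required where `a n ≠ 0`, so that a non-integrable `f 0` (here `z⁻¹`)
is harmless when `a 0 = 0`. -/
theorem integral_tsum_mul_ofReal_of_nonneg {α : Type*} [MeasurableSpace α] {μ : Measure α}
    {a b : ℕ → ℂ} {f : ℕ → α → ℝ} (hf_nonneg : ∀ n, 0 ≤ᵐ[μ] f n)
    (hf_int : ∀ n, a n ≠ 0 → Integrable (f n) μ) (hb : ∀ n, a n * ∫ x, f n x ∂μ = b n)
    (hsum : Summable fun n => ‖b n‖) :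
    ∫ x, ∑' n, a n * (f n x : ℂ) ∂μ = ∑' n, b n := by
  have hint : ∀ n, Integrable (fun x => a n * (f n x : ℂ)) μ := fun n => by
    by_cases han : a n = 0
    · simp [han]
    · exact (hf_int n han).ofReal.const_mul _
  -- Since `f n ≥ 0`, the integral of the norm is the norm of the integral.
  have hnorm : ∀ n, ∫ x, ‖a n * (f n x : ℂ)‖ ∂μ = ‖b n‖ := fun n => by
    rw [← hb, norm_mul, Complex.norm_real, Real.norm_of_nonneg
      (integral_nonneg_of_ae (hf_nonneg n)), ← integral_const_mul]
    refine integral_congr_ae ((hf_nonneg n).mono fun x hx => ?_)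
    simp [abs_of_nonneg hx]
  rw [← integral_tsum_of_summable_integral_norm hint (by simpa only [hnorm] using hsum)]
  refine tsum_congr fun n => ?_
  rw [integral_const_mul, integral_complex_ofReal, hb]

open Real in
theorem ofReal_neg_log_cpow_mul_tsum_mul_inv (a : ℕ → ℂ) {s z : ℝ} (hz : z ∈ Ioo (0 : ℝ) 1) :
    ((-log z : ℝ) : ℂ) ^ ((s : ℂ) - 1) * (∑' n : ℕ, a n * (z : ℂ) ^ n) * (z : ℂ)⁻¹ =
      ∑' n : ℕ, a n * (((-log z) ^ (s - 1) * z ^ ((n : ℝ) - 1) : ℝ) : ℂ) := by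
  have hlog : 0 ≤ -log z := neg_nonneg.2 (log_nonpos hz.1.le hz.2.le)
  rw [← tsum_mul_left, ← tsum_mul_right]
  refine tsum_congr fun n => ?_
  rw [rpow_sub hz.1, rpow_one, rpow_natCast]
  push_cast [Complex.ofReal_cpow hlog]
  ring

theorem ofReal_div_rpow_natCast (x s : ℝ) (n : ℕ) :
    ((x / (n : ℝ) ^ s : ℝ) : ℂ) = x / (n : ℂ) ^ (s : ℂ) := by
  rw [Complex.ofReal_div, Complex.ofReal_cpow n.cast_nonneg, Complex.ofReal_natCast]

open Real in
theorem integral_Ioo_neg_log_cpow_mul_tsum_mul_inv {a : ℕ → ℂ} (ha0 : a 0 = 0) {s : ℝ}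
    (hs : 0 < s) (hsum : LSeriesSummable a s) :
    ∫ z in Ioo (0 : ℝ) 1,
        ((-log z : ℝ) : ℂ) ^ ((s : ℂ) - 1) * (∑' n : ℕ, a n * (z : ℂ) ^ n) * (z : ℂ)⁻¹ =
      Complex.Gamma s * LSeries a s := by
  have hvalue : ∀ n : ℕ, n ≠ 0 →
      ∫ z in Ioo (0 : ℝ) 1, (-log z) ^ (s - 1) * z ^ ((n : ℝ) - 1) = Gamma s / (n : ℝ) ^ s :=
    fun n hn => integral_Ioo_neg_log_rpow_mul_rpow hs (by positivity)
  rw [setIntegral_congr_fun measurableSet_Ioo fun z hz =>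
    ofReal_neg_log_cpow_mul_tsum_mul_inv a hz, LSeries, ← tsum_mul_left]
  refine integral_tsum_mul_ofReal_of_nonneg (fun n => ?_) (fun n han => ?_) (fun n => ?_)
    (hsum.mul_left _).norm
  · filter_upwards [ae_restrict_mem measurableSet_Ioo] with z hz
    exact mul_nonneg (rpow_nonneg (neg_nonneg.2 (log_nonpos hz.1.le hz.2.le)) _)
      (rpow_nonneg hz.1.le _)
  · have hn : n ≠ 0 := by rintro rfl; exact han ha0
    exact .of_integral_ne_zero (by rw [hvalue n hn]; have := Gamma_pos_of_pos hs; positivity)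
  · rcases eq_or_ne n 0 with rfl | hn
    · simp [ha0]
    · rw [hvalue n hn, ofReal_div_rpow_natCast, LSeries.term_of_ne_zero hn, Complex.Gamma_ofReal]
      ring

theorem integral_Ioo_tsum_mul_rpow_rpow_sub_one {a : ℕ → ℂ} (ha0 : a 0 = 0) {s : ℝ}
    (hsum : LSeriesSummable a s) :
    ∫ z in Ioo (0 : ℝ) 1, ∑' n : ℕ, a n * ((z ^ ((n : ℝ) ^ s - 1) : ℝ) : ℂ) = LSeries a s := by
  have hvalue : ∀ n : ℕ, n ≠ 0 → ∫ z in Ioo (0 : ℝ) 1, z ^ ((n : ℝ) ^ s - 1) = 1 / (n : ℝ) ^ s :=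
    fun n hn => integral_Ioo_rpow_sub_one (by positivity)
  refine integral_tsum_mul_ofReal_of_nonneg (fun n => ?_) (fun n han => ?_) (fun n => ?_)
    hsum.norm
  · filter_upwards [ae_restrict_mem measurableSet_Ioo] with z hz
    exact Real.rpow_nonneg hz.1.le _
  · have hn : n ≠ 0 := by rintro rfl; exact han ha0
    exact .of_integral_ne_zero (by rw [hvalue n hn]; positivity)
  · rcases eq_or_ne n 0 with rfl | hn
    · simp [ha0]
    · rw [hvalue n hn, ofReal_div_rpow_natCast, LSeries.term_of_ne_zero hn]
      push_cast
      ring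

theorem stmt_4_general (k : ℝ) (hk : 0 ≤ k) (a : ℕ → ℂ) (ha0 : a 0 = 0)
    (C : ℝ) (ha : ∀ n : ℕ, 1 ≤ n → ‖a n‖ ≤ C * (n : ℝ) ^ k)
    (F : ℝ → ℂ) (hF : ∀ z : ℝ, F z = ∑' n : ℕ, a n * (z : ℂ) ^ n)
    (s : ℝ) (hs : k + 1 < s) :
    (1 / Complex.Gamma (s : ℂ)) *
      ∫ z in Set.Ioo (0:ℝ) 1,
        ((-Real.log z : ℝ) : ℂ) ^ ((s : ℂ) - 1) * F z * (z : ℂ)⁻¹ =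
    ∫ z in Set.Ioo (0:ℝ) 1, ∑' n : ℕ, a n * ((z ^ ((n : ℝ) ^ s - 1) : ℝ) : ℂ) := by
  have hs0 : 0 < s := by linarith
  have hsum : LSeriesSummable a s :=
    LSeriesSummable_of_le_const_mul_rpow (x := k + 1) (by simpa using hs)
      ⟨C, fun n hn => by simpa using ha n (Nat.one_le_iff_ne_zero.2 hn)⟩
  have hΓ : Complex.Gamma s ≠ 0 := Complex.Gamma_ne_zero_of_re_pos (by simpa using hs0)
  simp only [hF]
  rw [integral_Ioo_neg_log_cpow_mul_tsum_mul_inv ha0 hs0 hsum,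
    integral_Ioo_tsum_mul_rpow_rpow_sub_one ha0 hsum, one_div, inv_mul_cancel_left₀ hΓ]

theorem stmt_4 (k : ℝ) (hk : 0 ≤ k) (a : ℕ → ℂ) (ha0 : a 0 = 0)
    (C : ℝ) (hC : 0 < C) (ha : ∀ n : ℕ, 1 ≤ n → ‖a n‖ ≤ C * (n : ℝ) ^ k)
    (F : ℝ → ℂ) (hF : ∀ z : ℝ, F z = ∑' n : ℕ, a n * (z : ℂ) ^ n)
    (s : ℝ) (hs : k + 1 < s) :
    (1 / Complex.Gamma (s : ℂ)) *
      ∫ z in Set.Ioo (0:ℝ) 1,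
        ((-Real.log z : ℝ) : ℂ) ^ ((s : ℂ) - 1) * F z * (z : ℂ)⁻¹ =
    ∫ z in Set.Ioo (0:ℝ) 1, ∑' n : ℕ, a n * ((z ^ ((n : ℝ) ^ s - 1) : ℝ) : ℂ) :=
  stmt_4_general k hk a ha0 C ha F hF s hs
end

section
/- Let r ≥ 0 be a real number and let a : ℕ → ℂ satisfy a(0) = 0 and |a(n)| ≤ C·n^r for some constant C > 0 and all n ≥ 1. Let k ≥ 1 be an integer, and define b : ℕ → ℂ by b(m) = a(n) if m = n^k for some n ≥ 1 and b(m) = 0 otherwise. Then: (i) |b(m)| ≤ C·m^{r/k} for all m ≥ 1; and (ii) for every s ∈ ℂ with Re s > r + k, (1/Γ(s)) · ∫_0^1 (−log z)^{s−1} · (Σ_{n≥1} a(n) z^n) · z^{−1} dz = (1/Γ(s/k)) · ∫_0^1 (−log z)^{s/k−1} · (Σ_{n≥1} a(n) z^{n^k}) · z^{−1} dz. -/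
/-!
Substituting `z = exp (-t)` turns `∫_{[0,1]} G(z) (dz/z)^w` into the Mellin transform of
`t ↦ G (exp (-t))`. For the gap series `G z = ∑ a n z^(n^k)` this is the exponential series
`∑ a n exp (-n^k t)`, whose Mellin transform is, termwise, `Γ(w) ∑ a n (n^k)^(-w)`, i.e. `Γ(w)` times
the L-series of `a` at `k w`. Taking `w = s` with `k = 1` and `w = s / k` shows that both sides of
the identity equal `LSeries a s`.
-/

open MeasureTheory Set

theorem integral_Ioo_zero_one_eq_integral_Ioi_exp_neg_s5 (φ : ℝ → ℂ) :
    ∫ z in Ioo (0 : ℝ) 1, φ z = ∫ t in Ioi (0 : ℝ), Real.exp (-t) • φ (Real.exp (-t)) := by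
  have himage : (fun t ↦ Real.exp (-t)) '' Ioi 0 = Ioo 0 1 := by
    rw [show (fun t ↦ Real.exp (-t)) = Real.exp ∘ Neg.neg from rfl, image_comp, image_neg_Ioi,
      neg_zero, Real.image_exp_Iio, Real.exp_zero]
  have hderiv : ∀ t ∈ Ioi (0 : ℝ),
      HasDerivWithinAt (fun t ↦ Real.exp (-t)) (-Real.exp (-t)) (Ioi 0) t := fun t _ ↦ by
    simpa using (hasDerivAt_neg t).exp.hasDerivWithinAt
  rw [← himage, integral_image_eq_integral_abs_deriv_smul measurableSet_Ioi hderiv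
    (Real.exp_injective.comp neg_injective).injOn]
  simp only [abs_neg, abs_of_pos (Real.exp_pos _)]

theorem integral_neg_log_cpow_mul_div_eq_mellin (G : ℝ → ℂ) (w : ℂ) :
    ∫ z in Ioo (0 : ℝ) 1, ((-Real.log z : ℝ) : ℂ) ^ (w - 1) * G z * (z : ℂ)⁻¹
      = mellin (fun t ↦ G (Real.exp (-t))) w := by
  rw [integral_Ioo_zero_one_eq_integral_Ioi_exp_neg_s5, mellin]
  refine setIntegral_congr_fun measurableSet_Ioi fun t _ ↦ ?_
  have : ((Real.exp (-t) : ℝ) : ℂ) ≠ 0 := by exact_mod_cast (Real.exp_pos _).ne'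
  simp only [Real.log_exp, neg_neg, Complex.real_smul, smul_eq_mul]
  field_simp

theorem summable_mul_exp_neg_natCast_pow_mul {a : ℕ → ℂ} {C r : ℝ}
    (ha : ∀ n, 1 ≤ n → ‖a n‖ ≤ C * (n : ℝ) ^ r) {k : ℕ} (hk : 1 ≤ k) {t : ℝ} (ht : 0 < t) :
    Summable fun n : ℕ ↦ a n * Real.exp (-((n ^ k : ℕ) : ℝ) * t) := by
  have hC : 0 ≤ C := by simpa using (norm_nonneg _).trans (ha 1 le_rfl)
  refine .of_norm_bounded_eventually_nat
    ((Real.summable_pow_mul_exp_neg_nat_mul ⌈r⌉₊ ht).mul_left C) ?_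
  filter_upwards [Filter.eventually_ge_atTop 1] with n hn
  have hn' : (1 : ℝ) ≤ n := by exact_mod_cast hn
  have hpow : (n : ℝ) ^ r ≤ (n : ℝ) ^ ⌈r⌉₊ := by
    simpa only [Real.rpow_natCast] using Real.rpow_le_rpow_of_exponent_le hn' (Nat.le_ceil r)
  have hexp : Real.exp (-((n ^ k : ℕ) : ℝ) * t) ≤ Real.exp (-t * n) := by
    have : (n : ℝ) ≤ ((n ^ k : ℕ) : ℝ) := by exact_mod_cast Nat.le_self_pow (by omega) n
    exact Real.exp_le_exp.mpr (by nlinarith)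
  rw [norm_mul, Complex.norm_real, Real.norm_of_nonneg (Real.exp_pos _).le]
  calc ‖a n‖ * Real.exp (-((n ^ k : ℕ) : ℝ) * t) ≤ C * (n : ℝ) ^ r * Real.exp (-t * n) := by
        gcongr; exact ha n hn
    _ ≤ C * ((n : ℝ) ^ ⌈r⌉₊ * Real.exp (-t * n)) := by
        rw [mul_assoc]; gcongr

theorem natCast_pow_cpow_eq (n k : ℕ) (w : ℂ) :
    (((n ^ k : ℕ) : ℝ) : ℂ) ^ w = (n : ℂ) ^ ((k : ℂ) * w) := by
  rw [Complex.natCast_cpow_natCast_mul]; push_cast; rfl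

theorem one_div_Gamma_mul_integral_gap_eq_LSeries {a : ℕ → ℂ} (ha0 : a 0 = 0) {C r : ℝ}
    (ha : ∀ n, 1 ≤ n → ‖a n‖ ≤ C * (n : ℝ) ^ r) {k : ℕ} (hk : 1 ≤ k) {w : ℂ}
    (hw : 0 < w.re) (hkw : r + 1 < k * w.re) :
    1 / Complex.Gamma w * ∫ z in Ioo (0 : ℝ) 1, ((-Real.log z : ℝ) : ℂ) ^ (w - 1) *
        (∑' n : ℕ, a n * (z : ℂ) ^ (n ^ k)) * (z : ℂ)⁻¹ = LSeries a (k * w) := by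
  have hkw_re : ((k : ℂ) * w).re = k * w.re := by simp
  have hsum : LSeriesSummable a (k * w) :=
    LSeriesSummable_of_le_const_mul_rpow (x := r + 1) (by rwa [hkw_re])
      ⟨C, fun n hn ↦ by simpa using ha n (Nat.one_le_iff_ne_zero.mpr hn)⟩
  have hterm : ∀ n, Complex.Gamma w * a n / (((n ^ k : ℕ) : ℝ) : ℂ) ^ w
      = Complex.Gamma w * LSeries.term a (k * w) n := by
    intro n
    rcases eq_or_ne n 0 with rfl | hn
    · simp [ha0]
    · rw [LSeries.term_of_ne_zero hn, natCast_pow_cpow_eq, mul_div_assoc]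
  have hmellin := hasSum_mellin (p := fun n ↦ ((n ^ k : ℕ) : ℝ))
    (F := fun t ↦ ∑' n : ℕ, a n * ((Real.exp (-t) : ℝ) : ℂ) ^ (n ^ k))
    (fun n ↦ (eq_or_ne n 0).imp (· ▸ ha0) (fun hn ↦ by positivity)) hw
    (fun t ht ↦ ?_) ?_
  · rw [integral_neg_log_cpow_mul_div_eq_mellin, ← hmellin.tsum_eq, tsum_congr hterm,
      tsum_mul_left, LSeries, one_div, inv_mul_cancel_left₀ (Complex.Gamma_ne_zero_of_re_pos hw)]
  · convert (summable_mul_exp_neg_natCast_pow_mul ha hk ht).hasSum using 1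
    refine tsum_congr fun n ↦ ?_
    rw [← Complex.ofReal_pow, ← Real.exp_nat_mul, mul_neg, ← neg_mul]
  · refine hsum.norm.congr fun n ↦ ?_
    rcases eq_or_ne n 0 with rfl | hn
    · simp [ha0]
    · rw [LSeries.norm_term_eq, if_neg hn, hkw_re, Real.rpow_natCast_mul (Nat.cast_nonneg n)]
      push_cast; rfl

theorem norm_gap_coeff_le_mul_rpow {a b : ℕ → ℂ} {C r : ℝ}
    (ha : ∀ n, 1 ≤ n → ‖a n‖ ≤ C * (n : ℝ) ^ r) {k : ℕ} (hk : 1 ≤ k)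
    (hb1 : ∀ n, 1 ≤ n → b (n ^ k) = a n)
    (hb2 : ∀ m, (¬ ∃ n, 1 ≤ n ∧ m = n ^ k) → b m = 0) (m : ℕ) :
    ‖b m‖ ≤ C * (m : ℝ) ^ (r / k) := by
  by_cases hm : ∃ n, 1 ≤ n ∧ m = n ^ k
  · obtain ⟨n, hn, rfl⟩ := hm
    have hk0 : (k : ℝ) ≠ 0 := by positivity
    rw [hb1 n hn, Nat.cast_pow, ← Real.rpow_natCast, ← Real.rpow_mul (Nat.cast_nonneg n),
      mul_div_cancel₀ r hk0]
    exact ha n hn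
  · have hC : 0 ≤ C := by simpa using (norm_nonneg _).trans (ha 1 le_rfl)
    rw [hb2 m hm, norm_zero]
    positivity

theorem stmt_5_general (r : ℝ) (hr : 0 ≤ r) (a : ℕ → ℂ) (ha0 : a 0 = 0)
    (C : ℝ) (ha : ∀ n : ℕ, 1 ≤ n → ‖a n‖ ≤ C * (n : ℝ) ^ r)
    (k : ℕ) (hk : 1 ≤ k) (b : ℕ → ℂ)
    (hb1 : ∀ n : ℕ, 1 ≤ n → b (n ^ k) = a n)
    (hb2 : ∀ m : ℕ, (¬ ∃ n : ℕ, 1 ≤ n ∧ m = n ^ k) → b m = 0) :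
    (∀ m : ℕ, 1 ≤ m → ‖b m‖ ≤ C * (m : ℝ) ^ (r / k)) ∧
    ∀ s : ℂ, r + k < s.re →
      (1 / Complex.Gamma s) *
        ∫ z in Set.Ioo (0:ℝ) 1,
          ((-Real.log z : ℝ) : ℂ) ^ (s - 1) * (∑' n : ℕ, a n * (z : ℂ) ^ n) * (z : ℂ)⁻¹ =
      (1 / Complex.Gamma (s / k)) *
        ∫ z in Set.Ioo (0:ℝ) 1,
          ((-Real.log z : ℝ) : ℂ) ^ (s / k - 1) *
            (∑' n : ℕ, a n * (z : ℂ) ^ (n ^ k)) * (z : ℂ)⁻¹ := by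
  refine ⟨fun m _ ↦ norm_gap_coeff_le_mul_rpow ha hk hb1 hb2 m, fun s hs ↦ ?_⟩
  have hk1 : (1 : ℝ) ≤ k := by exact_mod_cast hk
  have hk0 : (k : ℂ) ≠ 0 := by exact_mod_cast (by omega : k ≠ 0)
  have hsk : (k : ℝ) * (s / k).re = s.re := by
    rw [Complex.div_natCast_re, mul_div_cancel₀ _ (by positivity)]
  have hs0 : 0 < s.re := by linarith
  have hplain := one_div_Gamma_mul_integral_gap_eq_LSeries ha0 ha le_rfl hs0
    (by rw [Nat.cast_one, one_mul]; linarith)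
  have hgap := one_div_Gamma_mul_integral_gap_eq_LSeries ha0 ha hk (w := s / k)
    (by nlinarith) (by rw [hsk]; linarith)
  simp only [pow_one, Nat.cast_one, one_mul] at hplain
  rw [hplain, hgap, mul_div_cancel₀ s hk0]

theorem stmt_5 (r : ℝ) (hr : 0 ≤ r) (a : ℕ → ℂ) (ha0 : a 0 = 0)
    (C : ℝ) (hC : 0 < C) (ha : ∀ n : ℕ, 1 ≤ n → ‖a n‖ ≤ C * (n : ℝ) ^ r)
    (k : ℕ) (hk : 1 ≤ k) (b : ℕ → ℂ)
    (hb1 : ∀ n : ℕ, 1 ≤ n → b (n ^ k) = a n)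
    (hb2 : ∀ m : ℕ, (¬ ∃ n : ℕ, 1 ≤ n ∧ m = n ^ k) → b m = 0) :
    (∀ m : ℕ, 1 ≤ m → ‖b m‖ ≤ C * (m : ℝ) ^ (r / k)) ∧
    ∀ s : ℂ, r + k < s.re →
      (1 / Complex.Gamma s) *
        ∫ z in Set.Ioo (0:ℝ) 1,
          ((-Real.log z : ℝ) : ℂ) ^ (s - 1) * (∑' n : ℕ, a n * (z : ℂ) ^ n) * (z : ℂ)⁻¹ =
      (1 / Complex.Gamma (s / k)) *
        ∫ z in Set.Ioo (0:ℝ) 1,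
          ((-Real.log z : ℝ) : ℂ) ^ (s / k - 1) *
            (∑' n : ℕ, a n * (z : ℂ) ^ (n ^ k)) * (z : ℂ)⁻¹ :=
  stmt_5_general r hr a ha0 C ha k hk b hb1 hb2
end

section
/- Let w ∈ ℂ with |w| < 1 and let s ∈ ℂ with Re s > 1. Then the polylogarithm Li_s(w) = Σ_{n≥1} w^n / n^s satisfies Li_s(w) = (1/Γ(s)) · ∫_0^1 (−log t)^{s−1} · w · (1 − w·t)^{−1} dt. -/
/-!
Substituting `t = exp (-u)` turns the integral into the Mellin transform at `s` of
`F u = w e^{-u} / (1 - w e^{-u}) = ∑_{n ≥ 1} w ^ n e^{-n u}`. Integrating termwise,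
`∫_0^∞ u^{s-1} e^{-n u} du = Γ(s) / n ^ s`, so the Mellin transform is `Γ(s) Li_s(w)`.
-/

open MeasureTheory Set Real

theorem integral_Ioo_zero_one_eq_integral_comp_exp_neg {E : Type*} [NormedAddCommGroup E]
    [NormedSpace ℝ E] (g : ℝ → E) :
    ∫ x in Ioo 0 1, g x = ∫ t in Ioi 0, rexp (-t) • g (rexp (-t)) := by
  rw [integral_comp_neg_Ioi 0 (fun u ↦ rexp u • g (rexp u)), neg_zero,
    integral_Iic_eq_integral_Iio, ← exp_zero, ← image_exp_Iio]
  simpa [abs_of_pos (exp_pos _)] using integral_image_eq_integral_abs_deriv_smul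
    (measurableSet_Iio (a := 0)) (fun x _ ↦ (hasDerivAt_exp x).hasDerivWithinAt)
    (fun x _ y _ hxy ↦ exp_injective hxy) g

theorem hasSum_pow_succ_mul_exp_neg {w : ℂ} (hw : ‖w‖ ≤ 1) {t : ℝ} (ht : 0 < t) :
    HasSum (fun n : ℕ ↦ w ^ (n + 1) * rexp (-((n : ℝ) + 1) * t))
      (w * rexp (-t) * (1 - w * rexp (-t))⁻¹) := by
  set z : ℂ := w * rexp (-t)
  have hz : ‖z‖ < 1 := by
    rw [norm_mul, Complex.norm_real, norm_of_nonneg (exp_nonneg _)]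
    exact (mul_le_of_le_one_left (exp_nonneg _) hw).trans_lt (exp_lt_one_iff.mpr (by linarith))
  refine ((hasSum_geometric_of_norm_lt_one hz).mul_left z).congr_fun fun n ↦ ?_
  rw [← pow_succ', mul_pow, ← Complex.ofReal_pow, ← exp_nat_mul]
  push_cast
  ring_nf

theorem summable_norm_pow_succ_div_rpow {w : ℂ} (hw : ‖w‖ < 1) {σ : ℝ} (hσ : 0 ≤ σ) :
    Summable fun n : ℕ ↦ ‖w ^ (n + 1)‖ / ((n : ℝ) + 1) ^ σ := by
  refine .of_nonneg_of_le (fun n ↦ by positivity) (fun n ↦ ?_)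
    ((summable_geometric_of_lt_one (norm_nonneg w) hw).comp_injective (add_left_injective 1))
  rw [norm_pow]
  exact div_le_self (by positivity) (one_le_rpow (by linarith [n.cast_nonneg (α := ℝ)]) hσ)

theorem hasSum_mellin_geometric {w : ℂ} (hw : ‖w‖ < 1) {s : ℂ} (hs : 0 < s.re) :
    HasSum (fun n : ℕ ↦ Complex.Gamma s * w ^ (n + 1) / ((n : ℝ) + 1 : ℝ) ^ s)
      (mellin (fun t ↦ w * rexp (-t) * (1 - w * rexp (-t))⁻¹) s) :=
  hasSum_mellin (fun n ↦ .inr (by positivity)) hs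
    (fun _ ht ↦ hasSum_pow_succ_mul_exp_neg hw.le ht) (summable_norm_pow_succ_div_rpow hw hs.le)

theorem mellin_geometric_eq_integral_Ioo (w s : ℂ) :
    mellin (fun t ↦ w * rexp (-t) * (1 - w * rexp (-t))⁻¹) s =
      ∫ x in Ioo (0 : ℝ) 1, ((-log x : ℝ) : ℂ) ^ (s - 1) * w * (1 - w * (x : ℂ))⁻¹ := by
  rw [integral_Ioo_zero_one_eq_integral_comp_exp_neg, mellin]
  refine setIntegral_congr_fun measurableSet_Ioi fun t _ ↦ ?_
  simp only [log_exp, neg_neg, Complex.real_smul, smul_eq_mul]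
  ring

theorem stmt_9 (w : ℂ) (hw : ‖w‖ < 1) (s : ℂ) (hs : 1 < s.re) :
    ∑' n : ℕ, w ^ n / (n : ℂ) ^ s =
      (1 / Complex.Gamma s) *
        ∫ t in Set.Ioo (0:ℝ) 1,
          ((-Real.log t : ℝ) : ℂ) ^ (s - 1) * w * (1 - w * (t : ℂ))⁻¹ := by
  have hs₀ : 0 < s.re := by linarith
  have hsum : HasSum (fun n : ℕ ↦ w ^ n / (n : ℂ) ^ s)
      (1 / Complex.Gamma s * mellin (fun t ↦ w * rexp (-t) * (1 - w * rexp (-t))⁻¹) s) := by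
    have hs_ne : s ≠ 0 := fun h ↦ by simp [h] at hs₀
    have hΓ : Complex.Gamma s ≠ 0 := Complex.Gamma_ne_zero_of_re_pos hs₀
    -- the `n = 0` term is the junk value `1 / 0 ^ s = 1 / 0 = 0`
    rw [← hasSum_nat_add_iff' 1]
    simp only [Finset.sum_range_one, CharP.cast_eq_zero, Complex.zero_cpow hs_ne, div_zero,
      sub_zero]
    refine ((hasSum_mellin_geometric hw hs₀).mul_left (1 / Complex.Gamma s)).congr_fun fun n ↦ ?_
    push_cast
    field_simp
  rw [hsum.tsum_eq, mellin_geometric_eq_integral_Ioo]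
end

section
/- Let a ≥ 2 be an integer and define ξ_a(n) = 1 if a does not divide n and ξ_a(n) = 1 − a if a divides n. Suppose Ψ : ℂ → ℂ is analytic on an open neighborhood U of 1 and satisfies Ψ(t) = (Σ_{n=1}^{a} ξ_a(n) t^n) / (1 − t^a) for all t ∈ U with t^a ≠ 1. Let D denote the differential operator (D f)(t) = t · f′(t). Then for every positive integer m, (D^m Ψ)(1) = (1 − a^{m+1}) · ζ(−m), where ζ is the (analytically continued) Riemann zeta function. -/
/-!
Substituting `t = exp z` turns `D = t d/dt` into `d/dz`, so `(D^m Ψ)(1)` is the `m`-th derivative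
at `0` of `f z = Ψ (exp z)`. Clearing the denominator gives
`f z * (1 - exp (a z)) = ∑ ξ_a(n) exp (n z)`, and Leibniz's rule at `0` turns this into a
triangular recursion for the derivatives `f^{(k)}(0)`. By Faulhaber's formula the numbers
`(a^{k+1} - 1) B'_{k+1} / (k + 1)` satisfy the same recursion (they are the Taylor coefficients
of `(B(az) - B(z)) / z` with `B(z) = z e^z / (e^z - 1)`), and `ζ(-m) = -B'_{m+1} / (m + 1)`.
-/

open Finset Topology
open scoped Complex

theorem sum_range_choose_mul_pow_mul_bernoulli' (w n : ℕ) :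
    ∑ k ∈ range n, (n.choose k : ℚ) * w ^ (n - k) *
        ((w ^ (k + 1) - 1) * bernoulli' (k + 1) / (k + 1)) =
      w ^ (n + 1) - ∑ j ∈ Icc 1 w, (j : ℚ) ^ n := by
  have hn : (n + 1 : ℚ) ≠ 0 := by positivity
  have hpow : ∑ j ∈ Icc 1 w, (j : ℚ) ^ n * (n + 1) =
      ∑ i ∈ range (n + 1), ((n + 1).choose i : ℚ) * bernoulli' i * w ^ (n + 1 - i) := by
    rw [← Finset.Ico_add_one_right_eq_Icc, ← sum_mul, sum_Ico_pow, sum_mul]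
    refine sum_congr rfl fun i _ => ?_
    field_simp
  have hbern := sum_bernoulli' (n + 1)
  apply mul_left_cancel₀ hn
  calc (n + 1 : ℚ) * ∑ k ∈ range n, (n.choose k : ℚ) * w ^ (n - k) *
        ((w ^ (k + 1) - 1) * bernoulli' (k + 1) / (k + 1))
      = ∑ i ∈ range (n + 1),
          ((n + 1).choose i : ℚ) * bernoulli' i * (w ^ (n + 1) - w ^ (n + 1 - i)) := by
        rw [sum_range_succ', mul_sum]
        simp only [Nat.sub_zero, sub_self, mul_zero, add_zero]
        refine sum_congr rfl fun k hk => ?_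
        have hk : k < n := mem_range.mp hk
        have hch : ((n + 1 : ℕ) : ℚ) * n.choose k = (n + 1).choose (k + 1) * (k + 1 : ℕ) := by
          exact_mod_cast Nat.add_one_mul_choose_eq n k
        have hsplit : (w : ℚ) ^ (n + 1) = w ^ (n - k) * w ^ (k + 1) := by
          rw [← pow_add]
          congr 1
          omega
        rw [show n + 1 - (k + 1) = n - k by omega, hsplit]
        push_cast at hch
        field_simp
        linear_combination (w ^ (k + 1) - 1) * w ^ (n - k) * bernoulli' (k + 1) * hch
    _ = (n + 1) * (w ^ (n + 1) - ∑ j ∈ Icc 1 w, (j : ℚ) ^ n) := by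
        simp only [mul_sub, sum_sub_distrib, ← sum_mul, hbern, ← hpow]
        push_cast
        ring

theorem eq_of_forall_sum_range_choose_mul_pow_mul_eq {K : Type*} [Field K] [CharZero K] {w : K}
    (hw : w ≠ 0) {c d : ℕ → K}
    (h : ∀ n, ∑ k ∈ range n, (n.choose k : K) * w ^ (n - k) * c k =
      ∑ k ∈ range n, (n.choose k : K) * w ^ (n - k) * d k) :
    c = d := by
  funext k
  induction k using Nat.strong_induction_on with
  | _ k ih =>
    have hk := h (k + 1)
    rw [sum_range_succ, sum_range_succ,
      sum_congr rfl fun i hi => by rw [ih i (mem_range.mp hi)]] at hk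
    refine mul_left_cancel₀ ?_ (add_left_cancel hk)
    simp [hw, Nat.cast_add_one_ne_zero]

noncomputable def eulerOp (f : ℂ → ℂ) : ℂ → ℂ := fun t => t * deriv f t

theorem AnalyticOnNhd.eulerOp {f : ℂ → ℂ} {U : Set ℂ} (hf : AnalyticOnNhd ℂ f U) :
    AnalyticOnNhd ℂ (eulerOp f) U :=
  fun t ht => analyticAt_id.mul (hf.deriv t ht)

theorem iteratedDeriv_comp_cexp {U : Set ℂ} (hU : IsOpen U) (n : ℕ) {f : ℂ → ℂ}
    (hf : AnalyticOnNhd ℂ f U) {z : ℂ} (hz : cexp z ∈ U) :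
    iteratedDeriv n (f ∘ cexp) z = (eulerOp^[n] f) (cexp z) := by
  induction n generalizing f z with
  | zero => simp
  | succ n ih =>
    have hderiv : Set.EqOn (deriv (f ∘ cexp)) (eulerOp f ∘ cexp) (cexp ⁻¹' U) :=
      fun y hy => by
        rw [deriv_comp y (hf _ hy).differentiableAt Complex.differentiableAt_exp,
          Complex.deriv_exp]
        exact mul_comm _ _
    rw [iteratedDeriv_succ',
      hderiv.iteratedDeriv_of_isOpen (hU.preimage Complex.continuous_exp) n hz,
      ih hf.eulerOp hz, Function.iterate_succ_apply]

theorem sum_range_choose_mul_pow_mul_iteratedDeriv {f g : ℂ → ℂ} {w : ℂ}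
    (hf : AnalyticAt ℂ f 0) (hfg : (fun z => f z * (1 - cexp (w * z))) =ᶠ[𝓝 0] g) (n : ℕ) :
    ∑ k ∈ range n, (n.choose k : ℂ) * w ^ (n - k) * iteratedDeriv k f 0 =
      -iteratedDeriv n g 0 := by
  have hexp : ContDiff ℂ n fun z => 1 - cexp (w * z) := by fun_prop
  rw [← hfg.iteratedDeriv_eq, iteratedDeriv_fun_mul hf.contDiffAt hexp.contDiffAt,
    sum_range_succ,
    Nat.sub_self, iteratedDeriv_zero, mul_zero, Complex.exp_zero, sub_self, mul_zero, add_zero,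
    ← sum_neg_distrib]
  refine sum_congr rfl fun k hk => ?_
  rw [iteratedDeriv_const_sub (Nat.sub_pos_of_lt (mem_range.mp hk)), iteratedDeriv_neg,
    iteratedDeriv_cexp_const_mul]
  simp only [mul_zero, Complex.exp_zero, mul_one]
  ring

theorem iteratedDeriv_sum_mul_cexp_zero {ι : Type*} (s : Finset ι) (c d : ι → ℂ) (n : ℕ) :
    iteratedDeriv n (fun z => ∑ j ∈ s, c j * cexp (d j * z)) 0 =
      ∑ j ∈ s, c j * d j ^ n := by
  rw [iteratedDeriv_fun_sum fun j _ => by fun_prop]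
  simp [iteratedDeriv_const_mul_field]

theorem mul_one_sub_pow_eq_of_eq_div {Ψ P : ℂ → ℂ} {U : Set ℂ} {a : ℕ} (hU : IsOpen U)
    (ha : 0 < a) (hΨ : ContinuousOn Ψ U) (hP : Continuous P)
    (h : ∀ t ∈ U, t ^ a ≠ 1 → Ψ t = P t / (1 - t ^ a)) :
    ∀ t ∈ U, Ψ t * (1 - t ^ a) = P t := by
  have hroots : {t : ℂ | t ^ a = 1}.Finite :=
    (Polynomial.nthRoots a (1 : ℂ)).toFinset.finite_toSet.subset fun t ht => by
      simpa [Polynomial.mem_nthRoots ha] using ht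
  refine Set.EqOn.of_subset_closure (s := U ∩ {t | t ^ a = 1}ᶜ) (fun t ht => ?_)
    (hΨ.mul (by fun_prop)) hP.continuousOn Set.inter_subset_left
    ((hroots.countable.dense_compl ℂ).open_subset_closure_inter hU)
  rw [h t ht.1 ht.2, div_mul_cancel₀ _ (sub_ne_zero.mpr (Ne.symm ht.2))]

theorem sum_Icc_ite_dvd_mul_pow {a : ℕ} (ha : 0 < a) (n : ℕ) :
    ∑ j ∈ Icc 1 a, (if a ∣ j then 1 - (a : ℂ) else 1) * (j : ℂ) ^ n =
      ∑ j ∈ Icc 1 a, (j : ℂ) ^ n - (a : ℂ) ^ (n + 1) := by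
  have ha' : a ∈ Icc 1 a := mem_Icc.mpr ⟨ha, le_rfl⟩
  rw [← add_sum_erase _ _ ha', ← add_sum_erase _ _ ha', if_pos dvd_rfl,
    sum_congr rfl fun j hj => ?_]
  · ring
  · obtain ⟨hja, hj⟩ := mem_erase.mp hj
    obtain ⟨hj1, hjle⟩ := mem_Icc.mp hj
    rw [if_neg fun hdvd => hja (le_antisymm hjle (Nat.le_of_dvd hj1 hdvd)), one_mul]

theorem stmt_11_general (a : ℕ) (ha : 2 ≤ a) (Ψ : ℂ → ℂ) (U : Set ℂ) (hU : IsOpen U)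
    (h1U : (1 : ℂ) ∈ U) (hΨa : ∀ t ∈ U, AnalyticAt ℂ Ψ t)
    (hΨ : ∀ t ∈ U, t ^ a ≠ 1 →
      Ψ t = (∑ n ∈ Finset.Icc 1 a, (if a ∣ n then 1 - (a : ℂ) else 1) * t ^ n) / (1 - t ^ a))
    (m : ℕ) :
    ((fun f : ℂ → ℂ => fun t => t * deriv f t)^[m] Ψ) 1 =
      (1 - (a : ℂ) ^ (m + 1)) * riemannZeta (-(m : ℂ)) := by
  have ha0 : 0 < a := by omega
  have h0U : cexp 0 ∈ U := by rwa [Complex.exp_zero]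
  have hnum : (fun z => (Ψ ∘ cexp) z * (1 - cexp (a * z))) =ᶠ[𝓝 0]
      fun z => ∑ j ∈ Icc 1 a, (if a ∣ j then 1 - (a : ℂ) else 1) * cexp (j * z) := by
    filter_upwards [(hU.preimage Complex.continuous_exp).mem_nhds h0U] with z hz
    simp only [Function.comp_apply, Complex.exp_nat_mul]
    exact mul_one_sub_pow_eq_of_eq_div hU ha0
      (fun t ht => (hΨa t ht).continuousAt.continuousWithinAt) (by fun_prop) hΨ _ hz
  have hcoeff : (fun k => iteratedDeriv k (Ψ ∘ cexp) 0) =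
      fun k => (((a ^ (k + 1) - 1) * bernoulli' (k + 1) / (k + 1) : ℚ) : ℂ) :=
    eq_of_forall_sum_range_choose_mul_pow_mul_eq (Nat.cast_ne_zero.mpr ha0.ne') fun n => by
      rw [sum_range_choose_mul_pow_mul_iteratedDeriv ((hΨa _ h0U).comp analyticAt_cexp) hnum,
        iteratedDeriv_sum_mul_cexp_zero, sum_Icc_ite_dvd_mul_pow ha0, neg_sub]
      exact_mod_cast (sum_range_choose_mul_pow_mul_bernoulli' a n).symm
  have hD := iteratedDeriv_comp_cexp hU m hΨa h0U
  rw [Complex.exp_zero] at hD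
  change (eulerOp^[m] Ψ) 1 = _
  rw [← hD, congrFun hcoeff m, riemannZeta_neg_nat_eq_bernoulli']
  push_cast
  field_simp
  ring

theorem stmt_11 (a : ℕ) (ha : 2 ≤ a) (Ψ : ℂ → ℂ) (U : Set ℂ) (hU : IsOpen U)
    (h1U : (1 : ℂ) ∈ U) (hΨa : ∀ t ∈ U, AnalyticAt ℂ Ψ t)
    (hΨ : ∀ t ∈ U, t ^ a ≠ 1 →
      Ψ t = (∑ n ∈ Finset.Icc 1 a, (if a ∣ n then 1 - (a : ℂ) else 1) * t ^ n) / (1 - t ^ a))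
    (m : ℕ) (hm : 0 < m) :
    ((fun f : ℂ → ℂ => fun t => t * deriv f t)^[m] Ψ) 1 =
      (1 - (a : ℂ) ^ (m + 1)) * riemannZeta (-(m : ℂ)) :=
  stmt_11_general a ha Ψ U hU h1U hΨa hΨ m
end

section
/- Let a ≥ 2 be an integer and define ξ_a(n) = 1 if a does not divide n and ξ_a(n) = 1 − a if a divides n. Then for every s ∈ ℂ with Re s > 1: (1/Γ(s)) · ∫_0^1 (−log t)^{s−1} · (Σ_{n=1}^{a} ξ_a(n) t^n) · ((1 − t^a) · t)^{−1} dt = (1 − a^{1−s}) · ζ(s), where a^{1−s} = exp((1−s)·log a). -/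
/-!
Substituting `t = exp (-u)` turns the integral into the Mellin transform of `Ψ (exp (-u))`.
Since `ξ_a` is `a`-periodic, `Ψ t = ∑_{n ≥ 1} ξ_a n tⁿ` on `(0, 1)`, and termwise integration
against `u ^ (s - 1) e^{-n u}` gives `Γ(s) ∑ ξ_a n n^{-s}`. Finally `ξ_a = 1 - a · 𝟙_{a ∣ ·}` and
`∑_{a ∣ n} n^{-s} = a^{-s} ζ(s)`, so the Dirichlet series is `(1 - a^{1-s}) ζ(s)`.
-/

open MeasureTheory Set Complex

theorem hasSum_periodic_mul_pow_succ {𝕜 : Type*} [NormedField 𝕜] [CompleteSpace 𝕜]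
    {f : ℕ → 𝕜} {a : ℕ} (hf : Function.Periodic f a) (ha : a ≠ 0) {z : 𝕜} (hz : ‖z‖ < 1) :
    HasSum (fun n ↦ f (n + 1) * z ^ (n + 1))
      ((∑ n ∈ Finset.Icc 1 a, f n * z ^ n) * (1 - z ^ a)⁻¹) := by
  have : NeZero a := ⟨ha⟩
  have hza : ‖z ^ a‖ < 1 := by
    rw [norm_pow]; exact pow_lt_one₀ (norm_nonneg _) hz ha
  set block : Fin a → 𝕜 := fun r ↦ f ((r : ℕ) + 1) * z ^ ((r : ℕ) + 1)
  have hblock : HasSum block (∑ n ∈ Finset.Icc 1 a, f n * z ^ n) := by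
    rw [← Finset.Ico_add_one_right_eq_Icc, Finset.sum_Ico_eq_sum_range, Nat.add_sub_cancel,
      ← Fin.sum_univ_eq_sum_range (fun r ↦ f (1 + r) * z ^ (1 + r))]
    simpa only [add_comm 1] using hasSum_fintype block
  have hprod := (hasSum_geometric_of_norm_lt_one hza).mul hblock <|
    summable_mul_of_summable_norm (f := fun q : ℕ ↦ (z ^ a) ^ q) (g := block)
      (by simpa only [norm_pow] using summable_geometric_of_lt_one (norm_nonneg _) hza)
      Summable.of_finite
  -- write `n = q * a + r` with `r < a`
  rw [mul_comm, ← (Nat.divModEquiv a).symm.hasSum_iff]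
  refine hprod.congr_fun fun ⟨q, r⟩ ↦ ?_
  simp only [Function.comp_apply, Nat.divModEquiv_symm_apply, block]
  have hper : f ((r : ℕ) + 1 + q * a) = f ((r : ℕ) + 1) := by
    simpa using hf.nat_mul q ((r : ℕ) + 1)
  rw [show q * a + r + 1 = (r : ℕ) + 1 + q * a by ring, hper, pow_add, mul_comm q a, pow_mul]
  ring

lemma integral_Ioo_zero_one_comp_neg_log {E : Type*} [NormedAddCommGroup E] [NormedSpace ℝ E]
    (g : ℝ → E) : ∫ t in Ioo 0 1, t⁻¹ • g (-Real.log t) = ∫ u in Ioi 0, g u := by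
  have himage : (fun u ↦ Real.exp (-u)) '' Ioi 0 = Ioo 0 1 := by
    rw [← image_image Real.exp Neg.neg, image_neg_Ioi, neg_zero, Real.image_exp_Iio, Real.exp_zero]
  rw [← himage, integral_image_eq_integral_abs_deriv_smul measurableSet_Ioi
    (fun u _ ↦ (hasDerivAt_neg u).exp.hasDerivWithinAt)
    (Real.exp_injective.comp neg_injective).injOn]
  refine setIntegral_congr_fun measurableSet_Ioi fun u _ ↦ ?_
  simp [smul_smul, (Real.exp_pos (-u)).ne']

lemma integral_Ioo_zero_one_eq_mellin_comp_exp_neg (g : ℝ → ℂ) (s : ℂ) :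
    ∫ t in Ioo 0 1, ((-Real.log t : ℝ) : ℂ) ^ (s - 1) * g t * (t : ℂ)⁻¹ =
      mellin (fun u ↦ g (Real.exp (-u))) s := by
  rw [mellin, ← integral_Ioo_zero_one_comp_neg_log]
  refine setIntegral_congr_fun measurableSet_Ioo fun t ht ↦ ?_
  rw [neg_neg, Real.exp_log ht.1, real_smul, smul_eq_mul, ofReal_inv]
  ring

lemma mellin_comp_exp_neg_eq_Gamma_mul_LSeries {f : ℕ → ℂ} {G : ℝ → ℂ} {s : ℂ} (hs : 0 < s.re)
    (hG : ∀ x ∈ Ioo (0 : ℝ) 1, HasSum (fun n ↦ f (n + 1) * (x : ℂ) ^ (n + 1)) (G x))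
    (hf : LSeriesSummable f s) :
    mellin (fun u ↦ G (Real.exp (-u))) s = Gamma s * LSeries f s := by
  have hdirichlet := hasSum_mellin (a := fun n ↦ f (n + 1)) (p := fun n : ℕ ↦ (n + 1 : ℝ))
    (F := fun u ↦ G (Real.exp (-u))) (fun n ↦ Or.inr n.cast_add_one_pos) hs (fun u hu ↦ ?_) ?_
  · have hL : HasSum (fun n ↦ LSeries.term f s (n + 1)) (LSeries f s) := by
      simpa using (hasSum_nat_add_iff' 1).mpr hf.LSeriesHasSum
    refine hdirichlet.unique (hL.mul_left _ |>.congr_fun fun n ↦ ?_)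
    rw [LSeries.term_of_ne_zero n.succ_ne_zero, mul_div_assoc]
    push_cast
    rfl
  · refine (hG _ ⟨Real.exp_pos _, Real.exp_lt_one_iff.mpr (neg_neg_of_pos hu)⟩).congr_fun
      fun n ↦ ?_
    rw [← ofReal_pow, ← Real.exp_nat_mul]
    push_cast
    ring_nf
  · refine (summable_nat_add_iff 1).mpr (summable_norm_iff.mpr hf) |>.congr fun n ↦ ?_
    rw [LSeries.norm_term_eq, if_neg n.succ_ne_zero]
    push_cast
    rfl

lemma LSeriesHasSum_indicator_dvd {a : ℕ} (ha : a ≠ 0) {s : ℂ} (hs : 1 < s.re) :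
    LSeriesHasSum (fun n ↦ if a ∣ n then 1 else 0) s ((a : ℂ) ^ (-s) * riemannZeta s) := by
  have hmul : Function.Injective (a * ·) := mul_right_injective₀ ha
  rw [LSeriesHasSum, ← hmul.hasSum_iff]
  · refine (LSeriesHasSum_one hs).mul_left _ |>.congr_fun fun k ↦ ?_
    rcases eq_or_ne k 0 with rfl | hk
    · simp
    simp only [Function.comp_apply, LSeries.term_of_ne_zero hk,
      LSeries.term_of_ne_zero (mul_ne_zero ha hk), dvd_mul_right, if_true, Pi.one_apply,
      Nat.cast_mul, natCast_mul_natCast_cpow, cpow_neg]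
    field_simp
  · intro n hn
    have hndvd : ¬ a ∣ n := fun ⟨k, hk⟩ ↦ hn ⟨k, hk.symm⟩
    simp [LSeries.term_def, hndvd]

def xi (a n : ℕ) : ℂ := if a ∣ n then 1 - a else 1

lemma xi_periodic (a : ℕ) : Function.Periodic (xi a) a := fun n ↦ by
  simp only [xi, Nat.dvd_add_self_right]

lemma xi_eq_one_sub_smul (a : ℕ) : xi a = 1 - (a : ℂ) • fun n ↦ if a ∣ n then 1 else 0 := by
  ext n
  by_cases h : a ∣ n <;> simp [xi, h]

lemma LSeriesHasSum_xi {a : ℕ} (ha : a ≠ 0) {s : ℂ} (hs : 1 < s.re) :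
    LSeriesHasSum (xi a) s ((1 - (a : ℂ) ^ (1 - s)) * riemannZeta s) := by
  have h := (LSeriesHasSum_one hs).sub ((LSeriesHasSum_indicator_dvd ha hs).smul (a : ℂ))
  rw [← xi_eq_one_sub_smul] at h
  convert h using 1
  rw [cpow_sub _ _ (Nat.cast_ne_zero.mpr ha), cpow_one, cpow_neg]
  ring

theorem stmt_12 (a : ℕ) (ha : 2 ≤ a) (s : ℂ) (hs : 1 < s.re) :
    (1 / Complex.Gamma s) *
      ∫ t in Set.Ioo (0:ℝ) 1,
        ((-Real.log t : ℝ) : ℂ) ^ (s - 1) *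
          (∑ n ∈ Finset.Icc 1 a, (if a ∣ n then 1 - (a : ℂ) else 1) * (t : ℂ) ^ n) *
          ((1 - (t : ℂ) ^ a) * t)⁻¹ =
    (1 - (a : ℂ) ^ (1 - s)) * riemannZeta s := by
  have ha0 : a ≠ 0 := by omega
  have hs0 : 0 < s.re := by linarith
  have hxi := LSeriesHasSum_xi ha0 hs
  set Ψ : ℝ → ℂ := fun t ↦ (∑ n ∈ Finset.Icc 1 a, xi a n * (t : ℂ) ^ n) * (1 - (t : ℂ) ^ a)⁻¹
  have hΨ : ∀ x ∈ Ioo (0 : ℝ) 1, HasSum (fun n ↦ xi a (n + 1) * (x : ℂ) ^ (n + 1)) (Ψ x) :=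
    fun x hx ↦ hasSum_periodic_mul_pow_succ (xi_periodic a) ha0 <| by
      rw [norm_real, Real.norm_of_nonneg hx.1.le]; exact hx.2
  calc _ = (1 / Gamma s) * mellin (fun u ↦ Ψ (Real.exp (-u))) s := by
        rw [← integral_Ioo_zero_one_eq_mellin_comp_exp_neg]
        congr 1
        refine setIntegral_congr_fun measurableSet_Ioo fun t _ ↦ ?_
        simp only [Ψ, xi, mul_inv]
        ring
    _ = (1 - (a : ℂ) ^ (1 - s)) * riemannZeta s := by
        rw [mellin_comp_exp_neg_eq_Gamma_mul_LSeries hs0 hΨ hxi.LSeriesSummable, hxi.LSeries_eq,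
          one_div, inv_mul_cancel_left₀ (Gamma_ne_zero_of_re_pos hs0)]
end

section
/- For every s ∈ ℂ with Re s > 2: (1/Γ(s)) · ∫_0^1 (−log z)^{s−1} · (Σ_{n≥1} μ(n) z^n) · z^{−1} dz = 1/ζ(s), where μ is the Möbius function and ζ is the Riemann zeta function (which is nonzero for Re s > 1). -/
open MeasureTheory Real Set

/-!
Substituting `z = exp (-t)` turns the integral into the Mellin transform of
`t ↦ ∑ μ(n) e^{-nt}`. Integrating term by term, `∫₀^∞ t^{s-1} e^{-nt} dt = Γ(s) n^{-s}`, so the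
Mellin transform is `Γ(s) ∑ μ(n) n^{-s} = Γ(s) / ζ(s)`.
-/

theorem integral_Ioo_neg_log_cpow_mul_inv_eq_mellin (f : ℝ → ℂ) (s : ℂ) :
    ∫ z in Ioo (0:ℝ) 1, ((-log z : ℝ) : ℂ) ^ (s - 1) * f z * (z : ℂ)⁻¹ =
      mellin (fun t => f (rexp (-t))) s := by
  have himage : (fun t => rexp (-t)) '' Ioi 0 = Ioo (0:ℝ) 1 := by
    ext x
    constructor
    · rintro ⟨t, ht, rfl⟩
      exact ⟨exp_pos _, exp_lt_one_iff.mpr (neg_neg_iff_pos.mpr ht)⟩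
    · rintro ⟨hx0, hx1⟩
      exact ⟨-log x, neg_pos.mpr (log_neg hx0 hx1), by simp [exp_log hx0]⟩
  have hderiv (t : ℝ) : HasDerivWithinAt (fun t => rexp (-t)) (-rexp (-t)) (Ioi 0) t := by
    simpa using ((hasDerivAt_neg t).exp).hasDerivWithinAt
  have hinj : InjOn (fun t => rexp (-t)) (Ioi 0) := fun a _ b _ h => by
    simpa using exp_injective h
  rw [← himage, integral_image_eq_integral_abs_deriv_smul measurableSet_Ioi
    (fun t _ => hderiv t) hinj, mellin]
  refine setIntegral_congr_fun measurableSet_Ioi fun t _ => ?_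
  have hexp : ((rexp (-t) : ℝ) : ℂ) ≠ 0 := Complex.ofReal_ne_zero.mpr (exp_pos _).ne'
  simp only [log_exp, neg_neg, abs_neg, abs_exp, Complex.real_smul, smul_eq_mul]
  field_simp

theorem hasSum_mul_rexp_neg_nat_mul {a : ℕ → ℂ} {C : ℝ} (ha : ∀ n, ‖a n‖ ≤ C) {t : ℝ}
    (ht : 0 < t) :
    HasSum (fun n : ℕ => a n * rexp (-(n : ℝ) * t))
      (∑' n : ℕ, a n * ((rexp (-t) : ℝ) : ℂ) ^ n) := by
  have hpow (n : ℕ) : ((rexp (-(n : ℝ) * t) : ℝ) : ℂ) = ((rexp (-t) : ℝ) : ℂ) ^ n := by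
    rw [← Complex.ofReal_pow, ← exp_nat_mul, mul_neg, neg_mul]
  simp only [hpow]
  refine Summable.hasSum (Summable.of_norm_bounded (g := fun n : ℕ => C * rexp (-t) ^ n) ?_ ?_)
  · exact (summable_geometric_of_lt_one (exp_nonneg _) (exp_lt_one_iff.mpr (by linarith))).mul_left C
  · intro n
    rw [norm_mul, norm_pow, Complex.norm_real, norm_of_nonneg (exp_nonneg _)]
    exact mul_le_mul_of_nonneg_right (ha n) (by positivity)

theorem mellin_tsum_mul_rexp_neg_pow {a : ℕ → ℂ} {C : ℝ} (ha : ∀ n, ‖a n‖ ≤ C) (ha₀ : a 0 = 0)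
    {s : ℂ} (hs : 1 < s.re) :
    mellin (fun t => ∑' n : ℕ, a n * ((rexp (-t) : ℝ) : ℂ) ^ n) s =
      Complex.Gamma s * LSeries a s := by
  have hmellin := hasSum_mellin (p := fun n : ℕ => (n : ℝ)) (s := s)
    (fun n => n.eq_zero_or_pos.imp (fun hn => hn ▸ ha₀) Nat.cast_pos.mpr) (by linarith)
    (fun t ht => hasSum_mul_rexp_neg_nat_mul ha ht) ?_
  · rw [← hmellin.tsum_eq, LSeries, ← tsum_mul_left]
    congr 1 with n
    rcases eq_or_ne n 0 with rfl | hn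
    · simp [ha₀]
    · rw [LSeries.term_of_ne_zero hn, mul_div_assoc, Complex.ofReal_natCast]
  · refine (LSeriesSummable_of_bounded_of_one_lt_real (fun n _ => ha n) hs).norm.congr fun n => ?_
    rcases eq_or_ne n 0 with rfl | hn
    · simp [ha₀]
    · simp [hn]

theorem LSeries_moebius_eq_inv_riemannZeta {s : ℂ} (hs : 1 < s.re) :
    LSeries (fun n => (ArithmeticFunction.moebius n : ℂ)) s = (riemannZeta s)⁻¹ := by
  rw [← LSeries_one_eq_riemannZeta hs]
  exact (inv_eq_of_mul_eq_one_right (LSeries_one_mul_Lseries_moebius hs)).symm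

theorem stmt_16 (s : ℂ) (hs : 2 < s.re) :
    (1 / Complex.Gamma s) *
      ∫ z in Set.Ioo (0:ℝ) 1,
        ((-Real.log z : ℝ) : ℂ) ^ (s - 1) *
          (∑' n : ℕ, (ArithmeticFunction.moebius n : ℂ) * (z : ℂ) ^ n) * (z : ℂ)⁻¹ =
    (riemannZeta s)⁻¹ := by
  have hs₁ : 1 < s.re := by linarith
  have hμ (n : ℕ) : ‖(ArithmeticFunction.moebius n : ℂ)‖ ≤ 1 := by
    rw [Complex.norm_intCast]
    exact_mod_cast ArithmeticFunction.abs_moebius_le_one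
  rw [integral_Ioo_neg_log_cpow_mul_inv_eq_mellin, mellin_tsum_mul_rexp_neg_pow hμ (by simp) hs₁,
    LSeries_moebius_eq_inv_riemannZeta hs₁, one_div,
    inv_mul_cancel_left₀ (Complex.Gamma_ne_zero_of_re_pos (by linarith))]
end
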